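/- Integrality of the symmetric quantum 6j-symbol: for all nonnegative half-integers a,b,c,d,e,f such that the triples (a,b,c), (a,e,f), (d,b,f), (d,e,c) are admissible, the renormalized 6j-symbol Tet(a,b,c,d,e,f) is a Laurent polynomial in q with integer coefficients, i.e. Tet(a,b,c,d,e,f) ∈ ℤ[q, q^{−1}]. -/

import Mathlib

/-!
Each summand of `Tet` is `(-1)^z [z+1]` times a q-multinomial coefficient. The quantum integer
`[n] = q^(n-1) + q^(n-3) + ⋯ + q^(1-n)` is a Laurent polynomial in `q` by `[m+n] = q^n [m] + q^(-m) [n]`,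
and the same identity gives the q-Pascal rule
`[m+n+2; m+1, n+1] = q^(n+1) [m+n+1; m, n+1] + q^(-(m+1)) [m+n+1; m+1, n]`, so q-binomials, and hence
q-multinomials (products of q-binomials), are Laurent polynomials too.
-/

noncomputable section
open scoped Classical

namespace QSpin

/-- The ambient field: rational functions over `ℂ` (which contains `ℚ(i)`),
in a variable `X` which represents the formal fourth root `q^(1/4)`. -/
abbrev K : Type := RatFunc ℂ

/-- `X` represents `q^(1/4)`. -/
def X : K := RatFunc.X

/-- The quantum variable `q = X^4`. -/
def q : K := X ^ 4

/-- `i = √-1`, as a constant of `K`. -/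
def ii : K := RatFunc.C Complex.I

/-- `q` raised to a rational power `r` (meaningful whenever `4 * r ∈ ℤ`). -/
def qpow (r : ℚ) : K := X ^ (4 * r).num

/-- Half of an integer, as a rational number: a half-integer is encoded by its double. -/
def hf (n : ℤ) : ℚ := (n : ℚ) / 2

/-- Integer powers of `i`. -/
def ipow (n : ℤ) : K := ii ^ n

/-- Integer powers of `-1`. -/
def m1pow (n : ℤ) : K := (-1 : K) ^ n

/-- The quantum integer `[n] = (q^n - q^(-n))/(q - q⁻¹)`. -/
def qint (n : ℤ) : K := (q ^ n - q ^ (-n)) / (q - q⁻¹)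

/-- The quantum factorial `[n]!`. -/
def qfact (n : ℕ) : K := ∏ j ∈ Finset.range n, qint (j + 1)

/-- The quantum factorial of an integer (zero for negative arguments). -/
def qfactz (n : ℤ) : K := if 0 ≤ n then qfact n.toNat else 0

/-- The quantum binomial `[n choose k]`, vanishing unless `0 ≤ k ≤ n`. -/
def qbin (n k : ℤ) : K :=
  if 0 ≤ k ∧ k ≤ n then qfactz n / (qfactz k * qfactz (n - k)) else 0

/-- Admissibility of a triple of half-integers (encoded by their doubles):
all nonnegative, total sum an integer (i.e. the sum of the doubles is even), and
the triangular inequalities hold. -/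
def Adm (a b c : ℤ) : Prop :=
  0 ≤ a ∧ 0 ≤ b ∧ 0 ≤ c ∧ 2 ∣ (a + b + c) ∧ c ≤ a + b ∧ a ≤ b + c ∧ b ≤ c + a

/-- The quantum Clebsch-Gordan coefficient `C^{a,b,c}_{u,v,t}`; all six half-integer
parameters are encoded by their doubles. -/
def CG (a b c u v t : ℤ) : K :=
  if u + v = t then
    ipow ((c - a - b) / 2) * m1pow ((b - v) / 2 - (c - t) / 2) *
      qpow ((hf b - hf v) * (hf b + hf v + 1) / 2 - (hf a - hf u) * (hf a + hf u + 1) / 2) *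
      (qfactz ((a + b - c) / 2) * qfactz ((b + c - a) / 2) * qfactz ((c + a - b) / 2) /
        qfactz c) *
      ∑ z ∈ Finset.range (((c - t) / 2).toNat + 1),
        m1pow z *
          qpow (((z : ℚ) - (((c - t) / 2 - (z : ℤ) : ℤ) : ℚ)) * (hf c + hf t + 1) / 2) *
          qbin ((a + u) / 2 + z) ((a + c - b) / 2) *
          qbin ((b + v) / 2 + ((c - t) / 2 - (z : ℤ))) ((b + c - a) / 2) *
          qbin ((c - t) / 2) z
  else 0

/-- The coefficient `W^{a,b,c}_{u,v,t} = C^{a,b,c}_{u,v,-t} · i^{-2t} q^{-t} · [2c]!`. -/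
def W (a b c u v t : ℤ) : K := CG a b c u v (-t) * ipow (-t) * qpow (-(hf t)) * qfactz c

/-- The coefficient `P^{a,b,c}_{u,v,t} = C^{a,c,b}_{-u,t,v} · i^{2u} q^{u} / [2a]!`. -/
def Pc (a b c u v t : ℤ) : K := CG a c b (-u) t v * ipow u * qpow (hf u) / qfactz a

/-- The coefficient `M^{a,b,c}_{u,v,t} = P^{a,b,c}_{u,v,-t} · i^{-2t} q^{-t} / [2c]!`. -/
def M (a b c u v t : ℤ) : K := Pc a b c u v (-t) * ipow (-t) * qpow (-(hf t)) / qfactz c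


/-- The renormalized unknot value `O(a) = (−1)^{2a}[2a+1]`
(the half-integer `a` is encoded by its double). -/
def O (a : ℤ) : K := m1pow a * qint (a + 1)

/-- The renormalized theta value
`Θ(a,b,c) = (−1)^{a+b+c}[a+b+c+1]·[a+b+c; a+b−c, b+c−a, c+a−b]`
(half-integers encoded by their doubles). -/
def Th (a b c : ℤ) : K :=
  m1pow ((a + b + c) / 2) * qint ((a + b + c) / 2 + 1) *
    (qfactz ((a + b + c) / 2) /
      (qfactz ((a + b - c) / 2) * qfactz ((b + c - a) / 2) * qfactz ((c + a - b) / 2)))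

/-- The renormalized 6j-symbol (tetrahedron)
`Tet(a,b,c,d,e,f) = Σ_{z=max Tᵢ}^{min Qⱼ} (−1)^z [z+1] ·
[z; z−T₁, z−T₂, z−T₃, z−T₄, Q₁−z, Q₂−z, Q₃−z]`
(half-integers encoded by their doubles). -/
def Tet (a b c d e f : ℤ) : K :=
  (let T1 := (a + b + c) / 2; let T2 := (a + e + f) / 2;
   let T3 := (d + b + f) / 2; let T4 := (d + e + c) / 2;
   let Q1 := (a + b + d + e) / 2; let Q2 := (a + c + d + f) / 2;
   let Q3 := (b + c + e + f) / 2;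
   ∑ z ∈ Finset.Icc (max (max T1 T2) (max T3 T4)) (min (min Q1 Q2) Q3),
     m1pow z * qint (z + 1) *
       (qfactz z /
         (qfactz (z - T1) * qfactz (z - T2) * qfactz (z - T3) * qfactz (z - T4) *
           qfactz (Q1 - z) * qfactz (Q2 - z) * qfactz (Q3 - z))))

end QSpin

theorem RatFunc.intDegree_X_zpow {F : Type*} [Field F] (n : ℤ) :
    RatFunc.intDegree (RatFunc.X ^ n : RatFunc F) = n := by
  have h (k : ℕ) : RatFunc.intDegree (RatFunc.X ^ k : RatFunc F) = k := by
    rw [← RatFunc.algebraMap_X, ← map_pow, RatFunc.intDegree_polynomial,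
      Polynomial.natDegree_X_pow]
  cases n with
  | ofNat k => exact h k
  | negSucc k => rw [zpow_negSucc, RatFunc.intDegree_inv, h, Int.negSucc_eq]; push_cast; ring

theorem Subring.zpow_mem_of_inv_mem {F : Type*} [DivisionRing F] {S : Subring F} {x : F}
    (hx : x ∈ S) (hx' : x⁻¹ ∈ S) (n : ℤ) : x ^ n ∈ S := by
  cases n with
  | ofNat k => exact zpow_natCast x k ▸ pow_mem hx k
  | negSucc k => exact (zpow_negSucc x k).symm ▸ inv_pow x (k + 1) ▸ pow_mem hx' (k + 1)

namespace QSpin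

lemma q_zpow_ne_one {n : ℤ} (hn : n ≠ 0) : q ^ n ≠ 1 := by
  intro h
  have := congrArg RatFunc.intDegree h
  rw [q, X, ← zpow_natCast, ← zpow_mul, RatFunc.intDegree_X_zpow, RatFunc.intDegree_one] at this
  omega

lemma q_ne_zero : q ≠ 0 := pow_ne_zero 4 RatFunc.X_ne_zero

lemma zpow_sub_zpow_neg_ne_zero {n : ℤ} (hn : n ≠ 0) : q ^ n - q ^ (-n) ≠ 0 := by
  rw [sub_ne_zero]
  intro h
  apply q_zpow_ne_one (show n + n ≠ 0 by omega)
  rw [show n + n = n - -n by ring, zpow_sub₀ q_ne_zero, h, div_self (zpow_ne_zero _ q_ne_zero)]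

lemma qint_ne_zero {n : ℤ} (hn : n ≠ 0) : qint n ≠ 0 :=
  div_ne_zero (zpow_sub_zpow_neg_ne_zero hn) (by simpa using zpow_sub_zpow_neg_ne_zero one_ne_zero)

lemma qint_add (m n : ℤ) : qint (m + n) = q ^ n * qint m + q ^ (-m) * qint n := by
  have hq := q_ne_zero
  have hd : q - q⁻¹ ≠ 0 := by simpa using zpow_sub_zpow_neg_ne_zero one_ne_zero
  simp only [qint, zpow_add₀ hq, neg_add, zpow_neg]
  field_simp
  ring

lemma qint_one : qint 1 = 1 := by
  simpa [qint] using div_self (zpow_sub_zpow_neg_ne_zero one_ne_zero)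

lemma qint_neg (n : ℤ) : qint (-n) = -qint n := by
  simp only [qint, neg_neg, ← neg_div, neg_sub]

lemma qfact_zero : qfact 0 = 1 :=
  Finset.prod_range_zero _

lemma qfact_succ (n : ℕ) : qfact (n + 1) = qfact n * qint (n + 1) :=
  Finset.prod_range_succ _ n

lemma qfact_ne_zero (n : ℕ) : qfact n ≠ 0 :=
  Finset.prod_ne_zero_iff.2 fun j _ => qint_ne_zero (by omega)

lemma qfactz_natCast (n : ℕ) : qfactz n = qfact n := by
  simp [qfactz]

lemma qfact_pascal (m n : ℕ) :
    qfact (m + 1 + (n + 1)) / (qfact (m + 1) * qfact (n + 1)) =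
      q ^ ((n : ℤ) + 1) * (qfact (m + (n + 1)) / (qfact m * qfact (n + 1))) +
        q ^ (-((m : ℤ) + 1)) * (qfact (m + 1 + n) / (qfact (m + 1) * qfact n)) := by
  have hm : qint ((m : ℤ) + 1) ≠ 0 := qint_ne_zero (by omega)
  have hn : qint ((n : ℤ) + 1) ≠ 0 := qint_ne_zero (by omega)
  have := qfact_ne_zero m
  have := qfact_ne_zero n
  have := qfact_ne_zero (m + n + 1)
  rw [show m + 1 + (n + 1) = m + n + 1 + 1 by ring, show m + (n + 1) = m + n + 1 by ring,
    show m + 1 + n = m + n + 1 by ring, qfact_succ (m + n + 1), qfact_succ m, qfact_succ n,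
    show ((m + n + 1 : ℕ) : ℤ) + 1 = ((m : ℤ) + 1) + ((n : ℤ) + 1) by push_cast; ring, qint_add]
  field_simp

def laurent : Subring K := Subring.closure {q, q⁻¹}

lemma q_zpow_mem (n : ℤ) : q ^ n ∈ laurent :=
  Subring.zpow_mem_of_inv_mem (Subring.subset_closure (by simp))
    (Subring.subset_closure (by simp)) n

lemma m1pow_mem (n : ℤ) : m1pow n ∈ laurent :=
  Subring.zpow_mem_of_inv_mem (neg_mem (one_mem laurent))
    (by rw [inv_neg_one]; exact neg_mem (one_mem laurent)) n

lemma qint_mem (n : ℤ) : qint n ∈ laurent := by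
  induction n using Int.induction_on with
  | zero => simp [qint]
  | succ i ih =>
    rw [qint_add, qint_one]
    exact add_mem (mul_mem (q_zpow_mem _) ih) (mul_mem (q_zpow_mem _) (one_mem _))
  | pred i ih =>
    rw [sub_eq_add_neg, qint_add, qint_neg 1, qint_one]
    exact add_mem (mul_mem (q_zpow_mem _) ih) (mul_mem (q_zpow_mem _) (neg_mem (one_mem _)))

lemma qfact_add_div_mem (m n : ℕ) : qfact (m + n) / (qfact m * qfact n) ∈ laurent := by
  induction m generalizing n with
  | zero => simp [qfact_zero, qfact_ne_zero]
  | succ m ihm =>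
    induction n with
    | zero => simp [qfact_zero, qfact_ne_zero]
    | succ n ihn =>
      rw [qfact_pascal]
      exact add_mem (mul_mem (q_zpow_mem _) (ihm (n + 1))) (mul_mem (q_zpow_mem _) ihn)

lemma qfactz_add_div_mem {m n : ℤ} (hm : 0 ≤ m) (hn : 0 ≤ n) :
    qfactz (m + n) / (qfactz m * qfactz n) ∈ laurent := by
  lift m to ℕ using hm
  lift n to ℕ using hn
  rw [← Nat.cast_add, qfactz_natCast, qfactz_natCast, qfactz_natCast]
  exact qfact_add_div_mem m n

lemma qfactz_sum_div_prod_mem (l : List ℤ) (hl : ∀ n ∈ l, 0 ≤ n) :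
    qfactz l.sum / (l.map qfactz).prod ∈ laurent := by
  induction l with
  | nil => simp [qfactz, qfact]
  | cons m l ih =>
    have hm := hl m (by simp)
    have hs : 0 ≤ l.sum := List.sum_nonneg fun n hn => hl n (by simp [hn])
    have hs' : qfactz l.sum ≠ 0 := by
      rw [qfactz, if_pos hs]; exact qfact_ne_zero _
    have split : qfactz (m + l.sum) / (qfactz m * (l.map qfactz).prod) =
        qfactz (m + l.sum) / (qfactz m * qfactz l.sum) * (qfactz l.sum / (l.map qfactz).prod) := by
      field_simp
    rw [List.sum_cons, List.map_cons, List.prod_cons, split]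
    exact mul_mem (qfactz_add_div_mem hm hs) (ih fun n hn => hl n (by simp [hn]))

lemma qmultinomial_seven_mem {n n₁ n₂ n₃ n₄ n₅ n₆ n₇ : ℤ}
    (hn : n = n₁ + n₂ + n₃ + n₄ + n₅ + n₆ + n₇) (h₁ : 0 ≤ n₁) (h₂ : 0 ≤ n₂) (h₃ : 0 ≤ n₃)
    (h₄ : 0 ≤ n₄) (h₅ : 0 ≤ n₅) (h₆ : 0 ≤ n₆) (h₇ : 0 ≤ n₇) :
    qfactz n / (qfactz n₁ * qfactz n₂ * qfactz n₃ * qfactz n₄ * qfactz n₅ * qfactz n₆ *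
      qfactz n₇) ∈ laurent := by
  have h := qfactz_sum_div_prod_mem [n₁, n₂, n₃, n₄, n₅, n₆, n₇] (by simp [*])
  simp only [List.sum_cons, List.sum_nil, List.map_cons, List.map_nil, List.prod_cons,
    List.prod_nil, add_zero, mul_one, ← add_assoc, ← mul_assoc] at h
  rwa [hn]

/-- Integrality of the symmetric quantum 6j-symbol: for nonnegative
half-integers `a,b,c,d,e,f` (encoded by doubles) with `(a,b,c)`, `(a,e,f)`, `(d,b,f)`,
`(d,e,c)` admissible, `Tet(a,b,c,d,e,f)` is a Laurent polynomial in `q` with integer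
coefficients, i.e. it lies in the subring `ℤ[q, q⁻¹]` of `K`. -/
theorem tet_integral (a b c d e f : ℤ)
    (h1 : Adm a b c) (h2 : Adm a e f) (h3 : Adm d b f) (h4 : Adm d e c) :
    Tet a b c d e f ∈ Subring.closure ({q, q⁻¹} : Set K) := by
  obtain ⟨-, -, -, even₁, -⟩ := h1
  obtain ⟨-, -, -, even₂, -⟩ := h2
  obtain ⟨-, -, -, even₃, -⟩ := h3
  obtain ⟨-, -, -, even₄, -⟩ := h4
  refine Subring.sum_mem _ fun z hz => mul_mem (mul_mem (m1pow_mem z) (qint_mem _)) ?_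
  simp only [Finset.mem_Icc, max_le_iff, le_min_iff] at hz
  -- the parity conditions make every halving in `Tet` exact, so the seven parts sum to `z`
  apply qmultinomial_seven_mem <;> omega

end QSpin
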